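/- arXiv:1208.3922 — 4 statements merged into one kernel-verified Lean document; each statement's English description precedes it below -/
import Mathlib

section
/- Let f : ℝ^n → ℝ be convex, ρ > 0, and for y ∈ ℝ^m define d(y) = inf_x [f(x) + ⟨y, q - Ex⟩ + (ρ/2)‖q - Ex‖²]. Suppose for y and y' the infima are attained at x and x' respectively. Then ρ‖E(x - x')‖ ≤ ‖y - y'‖. -/
open scoped RealInnerProductSpace

lemma sq_norm_combo {H : Type*} [NormedAddCommGroup H] [InnerProductSpace ℝ H]
    (a b : H) (t : ℝ) :
    ‖(1-t)•a + t•b‖^2 = (1-t)*‖a‖^2 + t*‖b‖^2 - t*(1-t)*‖a-b‖^2 := by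
  simp only [← real_inner_self_eq_norm_sq, inner_add_left, inner_add_right,
    inner_sub_left, inner_sub_right, real_inner_smul_left, real_inner_smul_right,
    real_inner_comm a b]
  ring

lemma strong_min {n m : ℕ} (f : EuclideanSpace ℝ (Fin n) → ℝ)
    (hf : ConvexOn ℝ Set.univ f)
    (E : EuclideanSpace ℝ (Fin n) →L[ℝ] EuclideanSpace ℝ (Fin m))
    (q : EuclideanSpace ℝ (Fin m)) (ρ : ℝ)
    (L : EuclideanSpace ℝ (Fin n) → EuclideanSpace ℝ (Fin m) → ℝ)
    (hL : ∀ x y, L x y = f x + ⟪y, q - E x⟫ + ρ / 2 * ‖q - E x‖ ^ 2)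
    (y : EuclideanSpace ℝ (Fin m)) (x : EuclideanSpace ℝ (Fin n))
    (hx : ∀ u, L x y ≤ L u y)
    (x' : EuclideanSpace ℝ (Fin n)) (t : ℝ) (ht0 : 0 < t) (ht1 : t < 1) :
    L x y + ρ/2 * (1-t) * ‖E x - E x'‖^2 ≤ L x' y := by
  set xt : EuclideanSpace ℝ (Fin n) := (1-t) • x + t • x' with hxt
  have hfxt : f xt ≤ (1-t) * f x + t * f x' :=
    hf.2 (Set.mem_univ x) (Set.mem_univ x') (by linarith) ht0.le (by ring)
  have hExt : q - E xt = (1-t) • (q - E x) + t • (q - E x') := by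
    simp only [hxt, map_add, map_smul]
    module
  have hnorm : ‖q - E xt‖^2
      = (1-t)*‖q - E x‖^2 + t*‖q - E x'‖^2 - t*(1-t)*‖E x - E x'‖^2 := by
    rw [hExt, sq_norm_combo]
    have hd : (q - E x) - (q - E x') = -(E x - E x') := by abel
    rw [hd, norm_neg]
  have hinner : ⟪y, q - E xt⟫ = (1-t) * ⟪y, q - E x⟫ + t * ⟪y, q - E x'⟫ := by
    rw [hExt, inner_add_right, real_inner_smul_right, real_inner_smul_right]
  have hbound : L xt y ≤ (1-t) * L x y + t * L x' y - ρ/2 * (t*(1-t)*‖E x - E x'‖^2) := by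
    rw [hL xt y, hL x y, hL x' y, hnorm, hinner]
    nlinarith [hfxt]
  have h0 := hx xt
  have ht : 0 < t := ht0
  nlinarith [h0, hbound]

/-- If `x` minimizes `L(·; y)` and `x'` minimizes `L(·; y')` for the augmented Lagrangian
`L(x; y) = f(x) + ⟨y, q - Ex⟩ + (ρ/2)‖q - Ex‖²` with `f` convex and `ρ > 0`, then
`ρ‖E(x - x')‖ ≤ ‖y - y'‖`. -/
theorem stmt_1 {n m : ℕ} (f : EuclideanSpace ℝ (Fin n) → ℝ)
    (hf : ConvexOn ℝ Set.univ f)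
    (E : EuclideanSpace ℝ (Fin n) →L[ℝ] EuclideanSpace ℝ (Fin m))
    (q : EuclideanSpace ℝ (Fin m)) (ρ : ℝ) (hρ : 0 < ρ)
    (L : EuclideanSpace ℝ (Fin n) → EuclideanSpace ℝ (Fin m) → ℝ)
    (hL : ∀ x y, L x y = f x + ⟪y, q - E x⟫ + ρ / 2 * ‖q - E x‖ ^ 2)
    (y y' : EuclideanSpace ℝ (Fin m))
    (x x' : EuclideanSpace ℝ (Fin n))
    (hx : ∀ u, L x y ≤ L u y) (hx' : ∀ u, L x' y' ≤ L u y') :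
    ρ * ‖E (x - x')‖ ≤ ‖y - y'‖ := by
  set v : EuclideanSpace ℝ (Fin m) := E x - E x' with hv
  have hEd : E (x - x') = v := by rw [hv, map_sub]
  rw [hEd]
  by_cases hv0 : ‖v‖ = 0
  · rw [hv0, mul_zero]; exact norm_nonneg _
  have hvpos : 0 < ‖v‖ := lt_of_le_of_ne (norm_nonneg _) (Ne.symm hv0)
  -- key inequality for every t ∈ (0,1)
  have key : ∀ t : ℝ, 0 < t → t < 1 → ρ * (1-t) * ‖v‖^2 ≤ ⟪y - y', v⟫ := by
    intro t ht0 ht1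
    have h1 := strong_min f hf E q ρ L hL y x hx x' t ht0 ht1
    have h2 := strong_min f hf E q ρ L hL y' x' hx' x t ht0 ht1
    have hsym : ‖E x' - E x‖ = ‖E x - E x'‖ := norm_sub_rev _ _
    rw [hsym] at h2
    simp only [hL] at h1 h2
    have hinn1 : ⟪y, q - E x'⟫ - ⟪y, q - E x⟫ = ⟪y, v⟫ := by
      rw [← inner_sub_right]
      congr 1
      rw [hv]; abel
    have hinn2 : ⟪y', q - E x⟫ - ⟪y', q - E x'⟫ = -⟪y', v⟫ := by
      rw [← inner_sub_right, ← inner_neg_right]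
      congr 1
      rw [hv]; abel
    have hgoal : ⟪y - y', v⟫ = ⟪y, v⟫ - ⟪y', v⟫ := by rw [inner_sub_left]
    rw [hgoal]
    nlinarith [h1, h2]
  have hmain : ρ * ‖v‖^2 ≤ ⟪y - y', v⟫ := by
    refine le_of_forall_pos_le_add ?_
    intro ε hε
    set t : ℝ := min (1/2) (ε / (ρ * ‖v‖^2)) with htdef
    have hden : 0 < ρ * ‖v‖^2 := by positivity
    have ht0 : 0 < t := lt_min (by norm_num) (div_pos hε hden)
    have ht1 : t < 1 := lt_of_le_of_lt (min_le_left _ _) (by norm_num)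
    have hk := key t ht0 ht1
    have hts : t * (ρ * ‖v‖^2) ≤ ε := by
      have : t ≤ ε / (ρ * ‖v‖^2) := min_le_right _ _
      calc t * (ρ * ‖v‖^2) ≤ (ε / (ρ * ‖v‖^2)) * (ρ * ‖v‖^2) :=
            mul_le_mul_of_nonneg_right this hden.le
        _ = ε := div_mul_cancel₀ _ hden.ne'
    nlinarith [hk, hts]
  have hcs : ⟪y - y', v⟫ ≤ ‖y - y'‖ * ‖v‖ := real_inner_le_norm _ _
  have : ρ * ‖v‖ * ‖v‖ ≤ ‖y - y'‖ * ‖v‖ := by nlinarith [hmain, hcs]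
  exact le_of_mul_le_mul_right this hvpos
end

section
/- Let f(x) = g(x) + (ρ/2)‖q - Ex‖² where g is convex with subgradients. If x minimizes f(·) - ⟨E^T y, ·⟩ and x' minimizes f(·) - ⟨E^T y', ·⟩, then ⟨y' - y, E(x' - x)⟩ ≥ ρ‖E(x' - x)‖². -/
open scoped RealInnerProductSpace

lemma comb_sq {m : ℕ} (a b : EuclideanSpace ℝ (Fin m)) (t : ℝ) :
    ‖(1-t)•a + t•b‖^2 = (1-t)*‖a‖^2 + t*‖b‖^2 - t*(1-t)*‖b-a‖^2 := by
  simp only [← real_inner_self_eq_norm_sq, inner_add_left, inner_add_right,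
    inner_sub_left, inner_sub_right, real_inner_smul_left, real_inner_smul_right]
  rw [real_inner_comm b a]
  ring

lemma aux_strong {n m : ℕ} (g : EuclideanSpace ℝ (Fin n) → ℝ)
    (hg : ConvexOn ℝ Set.univ g)
    (E : EuclideanSpace ℝ (Fin n) →L[ℝ] EuclideanSpace ℝ (Fin m))
    (q : EuclideanSpace ℝ (Fin m)) (ρ : ℝ) (hρ : 0 < ρ)
    (f : EuclideanSpace ℝ (Fin n) → ℝ)
    (hfdef : ∀ x, f x = g x + ρ / 2 * ‖q - E x‖ ^ 2)
    (y : EuclideanSpace ℝ (Fin m)) (x x' : EuclideanSpace ℝ (Fin n))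
    (hx : ∀ u, f x - ⟪y, E x⟫ ≤ f u - ⟪y, E u⟫) :
    f x - ⟪y, E x⟫ + ρ/2 * ‖E x' - E x‖^2 ≤ f x' - ⟪y, E x'⟫ := by
  set c : ℝ := ρ/2 * ‖E x' - E x‖^2 with hcdef
  have hc0 : 0 ≤ c := by positivity
  apply le_of_forall_pos_le_add
  intro ε hε
  set t : ℝ := min (1/2) (ε/(c+1)) with htdef
  have ht0 : 0 < t := lt_min (by norm_num) (by positivity)
  have ht1 : t < 1 := lt_of_le_of_lt (min_le_left _ _) (by norm_num)
  have htc : t * c ≤ ε := by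
    calc t * c ≤ ε/(c+1) * c := mul_le_mul_of_nonneg_right (min_le_right _ _) hc0
    _ ≤ ε := by rw [div_mul_eq_mul_div, div_le_iff₀ (by positivity)]; nlinarith
  have key := hx ((1-t)•x + t•x')
  have hgconv := hg.2 (Set.mem_univ x) (Set.mem_univ x') (by linarith : (0:ℝ) ≤ 1-t)
    ht0.le (by ring)
  have hEu : E ((1-t)•x + t•x') = (1-t)•(E x) + t•(E x') := by
    simp [map_add, map_smul]
  have hq : q - ((1-t)•(E x) + t•(E x')) = (1-t)•(q - E x) + t•(q - E x') := by
    rw [smul_sub, smul_sub]; module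
  have hnorm : ‖q - E ((1-t)•x + t•x')‖^2
      = (1-t)*‖q - E x‖^2 + t*‖q - E x'‖^2 - t*(1-t)*‖E x' - E x‖^2 := by
    rw [hEu, hq, comb_sq,
      show ‖(q - E x') - (q - E x)‖ = ‖E x' - E x‖ from by
        rw [show (q - E x') - (q - E x) = -(E x' - E x) from by abel, norm_neg]]
  have hinner : ⟪y, E ((1-t)•x + t•x')⟫ = (1-t)*⟪y, E x⟫ + t*⟪y, E x'⟫ := by
    rw [hEu, inner_add_right, real_inner_smul_right, real_inner_smul_right]
  simp only [hfdef, smul_eq_mul] at key hgconv ⊢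
  rw [hnorm, hinner] at key
  have h2 : t * ((g x + ρ/2*‖q - E x‖^2 - ⟪y, E x⟫) + (1-t)*(ρ/2*‖E x' - E x‖^2)) ≤
      t * (g x' + ρ/2*‖q - E x'‖^2 - ⟪y, E x'⟫) := by nlinarith [key, hgconv]
  have h3 := le_of_mul_le_mul_left h2 ht0
  rw [hcdef] at htc ⊢
  nlinarith [h3, htc, hc0, hcdef]

/-- Monotonicity estimate: if `f(x) = g(x) + (ρ/2)‖q - Ex‖²` with `g` convex, `x` minimizes
`f(·) - ⟨Eᵀy, ·⟩` and `x'` minimizes `f(·) - ⟨Eᵀy', ·⟩`, then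
`⟨y' - y, E(x' - x)⟩ ≥ ρ‖E(x' - x)‖²`. -/
theorem stmt_2 {n m : ℕ} (g : EuclideanSpace ℝ (Fin n) → ℝ)
    (hg : ConvexOn ℝ Set.univ g)
    (E : EuclideanSpace ℝ (Fin n) →L[ℝ] EuclideanSpace ℝ (Fin m))
    (q : EuclideanSpace ℝ (Fin m)) (ρ : ℝ) (hρ : 0 < ρ)
    (f : EuclideanSpace ℝ (Fin n) → ℝ)
    (hfdef : ∀ x, f x = g x + ρ / 2 * ‖q - E x‖ ^ 2)
    (y y' : EuclideanSpace ℝ (Fin m))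
    (x x' : EuclideanSpace ℝ (Fin n))
    (hx : ∀ u, f x - ⟪y, E x⟫ ≤ f u - ⟪y, E u⟫)
    (hx' : ∀ u, f x' - ⟪y', E x'⟫ ≤ f u - ⟪y', E u⟫) :
    ⟪y' - y, E (x' - x)⟫ ≥ ρ * ‖E (x' - x)‖ ^ 2 := by
  have K1 := aux_strong g hg E q ρ hρ f hfdef y x x' hx
  have K2 := aux_strong g hg E q ρ hρ f hfdef y' x' x hx'
  have hrev : ‖E x - E x'‖ = ‖E x' - E x‖ := norm_sub_rev _ _
  rw [hrev] at K2
  have hEd : E (x' - x) = E x' - E x := map_sub E x' x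
  rw [hEd, inner_sub_left, inner_sub_right, inner_sub_right]
  linarith
end

section
/- Let d(y) = min_x L(x; y) be the dual function of the augmented Lagrangian, let x̄^r minimize L(·; y^r), and suppose y^r = y^{r-1} + α(q - Ex^r). Then d(y^{r-1}) - d(y^r) ≤ -α⟨Ex^r - q, Ex̄^r - q⟩. -/
open scoped RealInnerProductSpace

/-- Decrease of the dual optimality gap (Lemma 3.2): with `x̄^{r-1}` minimizing `L(·; y^{r-1})`,
`x̄^r` minimizing `L(·; y^r)`, and the dual update `y^r = y^{r-1} + α(q - Ex^r)`, we have
`d(y^{r-1}) - d(y^r) ≤ -α⟨Ex^r - q, Ex̄^r - q⟩`, where `d(y) = min_x L(x; y)`. -/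
theorem stmt_13 {n m : ℕ} (f : EuclideanSpace ℝ (Fin n) → ℝ)
    (E : EuclideanSpace ℝ (Fin n) →L[ℝ] EuclideanSpace ℝ (Fin m))
    (q : EuclideanSpace ℝ (Fin m)) (ρ α : ℝ) (hρ : 0 ≤ ρ) (hα : 0 < α)
    (L : EuclideanSpace ℝ (Fin n) → EuclideanSpace ℝ (Fin m) → ℝ)
    (hL : ∀ x y, L x y = f x + ⟪y, q - E x⟫ + ρ / 2 * ‖q - E x‖ ^ 2)
    (yprev yr : EuclideanSpace ℝ (Fin m)) (xr xbarprev xbar : EuclideanSpace ℝ (Fin n))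
    (hxbarprev : ∀ u, L xbarprev yprev ≤ L u yprev)
    (hxbar : ∀ u, L xbar yr ≤ L u yr)
    (hupd : yr = yprev + α • (q - E xr)) :
    L xbarprev yprev - L xbar yr ≤ -α * ⟪E xr - q, E xbar - q⟫ := by
  have h1 := hxbarprev xbar
  have key : L xbar yprev - L xbar yr = -α * ⟪E xr - q, E xbar - q⟫ := by
    rw [hL, hL, hupd]
    have : ⟪yprev + α • (q - E xr), q - E xbar⟫ =
        ⟪yprev, q - E xbar⟫ + α * ⟪q - E xr, q - E xbar⟫ := by
      rw [inner_add_left, real_inner_smul_left]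
    rw [this]
    have : ⟪E xr - q, E xbar - q⟫ = ⟪q - E xr, q - E xbar⟫ := by
      rw [show E xr - q = -(q - E xr) by rw [neg_sub], show E xbar - q = -(q - E xbar) by rw [neg_sub],
        inner_neg_neg]
    rw [this]; ring
  linarith
end

section
/- Let L : ℝ^n → ℝ be convex and suppose for each block k, updating only block k from x^r to its block minimizer decreases L by at least γ‖w_k - x_k^r‖². If x^{r+1} = x^r + (1/K)(w - x^r) where w_k is the k-th block minimizer, then L(x^r) - L(x^{r+1}) ≥ (γ/K)‖w - x^r‖² = γK‖x^{r+1} - x^r‖². -/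
/-! The Jacobi iterate `x + (1/K)(w - x)` is the uniform average of the `K` points obtained from
`x` by moving a single block to its minimizer, because the block displacements add up to `w - x`.
Jensen's inequality therefore bounds `L` at the iterate by the average of the single-block values,
and each of those lies `γ‖w_k - x_k‖²` below `L x`. -/

open Finset Function

theorem Finset.sum_update_sub_self {ι : Type*} [Fintype ι] [DecidableEq ι] {E : ι → Type*}
    [∀ i, AddCommGroup (E i)] (x w : ∀ i, E i) :
    ∑ i, (update x i (w i) - x) = w - x := by
  have hsingle : ∀ i, update x i (w i) - x = Pi.single i (w i - x i) := fun i => by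
    ext j
    rcases eq_or_ne j i with rfl | hji <;> simp [*]
  simp only [hsingle, Finset.univ_sum_single]
  rfl

section Jacobi

variable {ι V : Type*} [Fintype ι] [Nonempty ι] [AddCommGroup V] [Module ℝ V]
  {L : V → ℝ}

theorem ConvexOn.map_add_inv_card_smul_sum_sub_le (hL : ConvexOn ℝ Set.univ L) (x : V)
    (p : ι → V) :
    L (x + (Fintype.card ι : ℝ)⁻¹ • ∑ i, (p i - x)) ≤
      (Fintype.card ι : ℝ)⁻¹ * ∑ i, L (p i) := by
  have hcard : (Fintype.card ι : ℝ) ≠ 0 := by positivity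
  have haverage : x + (Fintype.card ι : ℝ)⁻¹ • ∑ i, (p i - x) =
      ∑ i, (Fintype.card ι : ℝ)⁻¹ • p i := by
    rw [← Finset.smul_sum, Finset.sum_sub_distrib, Finset.sum_const, Finset.card_univ,
      ← Nat.cast_smul_eq_nsmul ℝ, smul_sub, smul_smul, inv_mul_cancel₀ hcard, one_smul,
      add_sub_cancel]
  rw [haverage, Finset.mul_sum]
  exact hL.map_sum_le (fun _ _ => by positivity) (by simp [hcard]) (fun _ _ => Set.mem_univ _)

theorem ConvexOn.inv_card_mul_sum_le_sub_map_add_inv_card_smul_sum_sub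
    (hL : ConvexOn ℝ Set.univ L) (x : V) (p : ι → V) (d : ι → ℝ)
    (hdesc : ∀ i, L x - L (p i) ≥ d i) :
    L x - L (x + (Fintype.card ι : ℝ)⁻¹ • ∑ i, (p i - x)) ≥
      (Fintype.card ι : ℝ)⁻¹ * ∑ i, d i := by
  have hjensen := hL.map_add_inv_card_smul_sum_sub_le x p
  have hsum : ∑ i, d i ≤ Fintype.card ι * L x - ∑ i, L (p i) := by
    calc ∑ i, d i ≤ ∑ i, (L x - L (p i)) := Finset.sum_le_sum fun i _ => hdesc i
      _ = Fintype.card ι * L x - ∑ i, L (p i) := by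
        rw [Finset.sum_sub_distrib, Finset.sum_const, Finset.card_univ, nsmul_eq_mul]
  have hcard : (0 : ℝ) < Fintype.card ι := by positivity
  have := mul_le_mul_of_nonneg_left hsum (inv_pos.mpr hcard).le
  rw [mul_sub, ← mul_assoc, inv_mul_cancel₀ hcard.ne', one_mul] at this
  linarith

end Jacobi

theorem stmt_19_general {K : ℕ} (hK : 0 < K) (E : Fin K → Type*)
    [∀ k, NormedAddCommGroup (E k)] [∀ k, NormedSpace ℝ (E k)]
    (L : (∀ k, E k) → ℝ) (hconv : ConvexOn ℝ Set.univ L)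
    (γ : ℝ)
    (xr w x1 : ∀ k, E k)
    (hdesc : ∀ k : Fin K,
      L xr - L (Function.update xr k (w k)) ≥ γ * ‖w k - xr k‖ ^ 2)
    (hupd : ∀ k, x1 k = xr k + ((K : ℝ)⁻¹) • (w k - xr k)) :
    L xr - L x1 ≥ γ / K * ∑ k : Fin K, ‖w k - xr k‖ ^ 2 ∧
      L xr - L x1 ≥ γ * K * ∑ k : Fin K, ‖x1 k - xr k‖ ^ 2 := by
  have : Nonempty (Fin K) := ⟨⟨0, hK⟩⟩
  have hx1 : x1 = xr + (Fintype.card (Fin K) : ℝ)⁻¹ •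
      ∑ k, (update xr k (w k) - xr) := by
    rw [Finset.sum_update_sub_self, Fintype.card_fin]
    exact funext hupd
  have hfirst : L xr - L x1 ≥ γ / K * ∑ k, ‖w k - xr k‖ ^ 2 := by
    have := hconv.inv_card_mul_sum_le_sub_map_add_inv_card_smul_sum_sub xr _ _ hdesc
    rwa [← hx1, Fintype.card_fin, ← Finset.mul_sum, ← mul_assoc, inv_mul_eq_div] at this
  have hstep : ∀ k, ‖x1 k - xr k‖ ^ 2 = (K : ℝ)⁻¹ ^ 2 * ‖w k - xr k‖ ^ 2 := fun k => by
    rw [hupd k, add_sub_cancel_left, norm_smul, mul_pow, Real.norm_of_nonneg (by positivity)]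
  have hK' : (K : ℝ) ≠ 0 := by positivity
  refine ⟨hfirst, ?_⟩
  rw [Finset.sum_congr rfl fun k _ => hstep k, ← Finset.mul_sum]
  convert hfirst using 1
  field_simp

/-- Sufficient descent of the Jacobi update with stepsize `1/K`: if updating only block `k` of
`x^r` to its block minimizer `w_k` decreases the convex function `L` by at least
`γ‖w_k - x_k^r‖²`, and `x^{r+1} = x^r + (1/K)(w - x^r)`, then
`L(x^r) - L(x^{r+1}) ≥ (γ/K)‖w - x^r‖² = γK‖x^{r+1} - x^r‖²`. -/
theorem stmt_19 {K : ℕ} (hK : 0 < K) (E : Fin K → Type*)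
    [∀ k, NormedAddCommGroup (E k)] [∀ k, NormedSpace ℝ (E k)]
    (L : (∀ k, E k) → ℝ) (hconv : ConvexOn ℝ Set.univ L)
    (γ : ℝ) (hγ : 0 < γ)
    (xr w x1 : ∀ k, E k)
    (hmin : ∀ k : Fin K, ∀ u : E k,
      L (Function.update xr k (w k)) ≤ L (Function.update xr k u))
    (hdesc : ∀ k : Fin K,
      L xr - L (Function.update xr k (w k)) ≥ γ * ‖w k - xr k‖ ^ 2)
    (hupd : ∀ k, x1 k = xr k + ((K : ℝ)⁻¹) • (w k - xr k)) :
    L xr - L x1 ≥ γ / K * ∑ k : Fin K, ‖w k - xr k‖ ^ 2 ∧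
      L xr - L x1 ≥ γ * K * ∑ k : Fin K, ‖x1 k - xr k‖ ^ 2 :=
  stmt_19_general hK E L hconv γ xr w x1 hdesc hupd
end
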